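/- Let A be a nontrivial closed class of decision tables from M_2^∞ and ψ a bounded complexity measure. If the function G_{ψ,A} is not everywhere defined, then the function H^∞_{ψ,A} is not everywhere defined. -/

import Mathlib

open Classical

noncomputable section

/-- A decision table with many-valued decisions over `E_k = {0,…,k-1}`.
Columns are labeled with attributes `f_i` identified with their indices `i : ℕ`;
a row is a function `ℕ → ℕ` supported on the attribute set, with values `< k`;
each row is labeled with a nonempty finite set of decisions. -/
structure Table (k : ℕ) where
  attrs : Finset ℕ
  rows : Finset (ℕ → ℕ)
  dec : (ℕ → ℕ) → Finset ℕ
  rows_mem : ∀ r ∈ rows, (∀ i ∈ attrs, r i < k) ∧ (∀ i ∉ attrs, r i = 0)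
  dec_nonempty : ∀ r ∈ rows, (dec r).Nonempty

namespace Table

variable {k : ℕ}

/-- a row satisfies a word (a list of (attribute, value) pairs) -/
def rowSat (r : ℕ → ℕ) (α : List (ℕ × ℕ)) : Prop := ∀ q ∈ α, r q.1 = q.2

/-- the word belongs to `Ω_k(T)` -/
def wordOk (T : Table k) (α : List (ℕ × ℕ)) : Prop := ∀ q ∈ α, q.1 ∈ T.attrs ∧ q.2 < k

/-- the subtable `Tα` -/
def applyWord (T : Table k) (α : List (ℕ × ℕ)) : Table k where
  attrs := T.attrs
  rows := T.rows.filter (fun r => rowSat r α)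
  dec := T.dec
  rows_mem := fun r hr => T.rows_mem r (Finset.mem_filter.mp hr).1
  dec_nonempty := fun r hr => T.dec_nonempty r (Finset.mem_filter.mp hr).1

/-- `T ∈ M_k^{∞c}` : the table has a common decision -/
def hasCommon (T : Table k) : Prop := ∃ d : ℕ, ∀ r ∈ T.rows, d ∈ T.dec r

/-- `N(T)` : number of rows -/
def NT (T : Table k) : ℕ := T.rows.card

/-- `W(T)` : number of columns (`0` for the empty table `Λ`) -/
def WT (T : Table k) : ℕ := if T.rows = ∅ then 0 else T.attrs.card

/-- the closure `[T]` of `T` under removal of columns and changing of decisions: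
`Q = J(ν, I(D,T))` for some `D ⊆ At(T)` and some `ν` (the decision labeling of `Q`
on its rows is arbitrary, i.e. is the arbitrary `ν` with nonempty finite values). -/
def closureT (T : Table k) : Set (Table k) :=
  {Q | ∃ D : Finset ℕ, D ⊆ T.attrs ∧ Q.attrs = T.attrs \ D ∧
      Q.rows = T.rows.image (fun r i => if i ∈ T.attrs \ D then r i else 0)}

end Table

/-- a closed class: `[A] = A` -/
def IsClosedClass {k : ℕ} (A : Set (Table k)) : Prop := ∀ T ∈ A, Table.closureT T ⊆ A

/-- a nontrivial class: contains nonempty tables -/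
def NontrivialClass {k : ℕ} (A : Set (Table k)) : Prop := ∃ T ∈ A, T.rows.Nonempty

/-- the part of a `k`-decision tree below one edge leaving the root -/
inductive DTree (k : ℕ) : Type
  | leaf (d : ℕ) : DTree k
  | node (a : ℕ) (n : ℕ) (lab : Fin (n + 1) → ℕ) (ch : Fin (n + 1) → DTree k) : DTree k

namespace DTree

variable {k : ℕ}

/-- the set of pairs (π(τ), terminal decision) over complete paths τ -/
def paths : DTree k → Set (List (ℕ × ℕ) × ℕ)
  | leaf d => {([], d)}
  | node a _ lab ch =>
      ⋃ i, (fun p : List (ℕ × ℕ) × ℕ => ((a, lab i) :: p.1, p.2)) '' paths (ch i)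

/-- edge labels belong to `E_k` -/
def wf : DTree k → Prop
  | leaf _ => True
  | node _ _ lab ch => (∀ i, lab i < k) ∧ ∀ i, wf (ch i)

/-- edges leaving any node are labeled with pairwise different numbers -/
def det : DTree k → Prop
  | leaf _ => True
  | node _ _ lab ch => Function.Injective lab ∧ ∀ i, det (ch i)

/-- the set of attributes attached to nodes -/
def attrs : DTree k → Finset ℕ
  | leaf _ => ∅
  | node a _ _ ch => insert a (Finset.univ.biUnion fun i => attrs (ch i))

end DTree

/-- a `k`-decision tree: an unlabeled root with `n+1` unlabeled edges leaving it -/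
structure KTree (k : ℕ) where
  n : ℕ
  sub : Fin (n + 1) → DTree k

namespace KTree

variable {k : ℕ}

def paths (Γ : KTree k) : Set (List (ℕ × ℕ) × ℕ) := ⋃ i, (Γ.sub i).paths

def wf (Γ : KTree k) : Prop := ∀ i, (Γ.sub i).wf

def attrs (Γ : KTree k) : Finset ℕ := Finset.univ.biUnion fun i => (Γ.sub i).attrs

end KTree

/-- partially bounded complexity measure on words over `P` -/
structure PBCM where
  toFun : List ℕ → ℕ
  pos : ∀ α, toFun α = 0 ↔ α = []
  perm : ∀ α β, List.Perm α β → toFun α = toFun β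
  mono : ∀ α β, toFun α ≤ toFun (α ++ β)
  subadd : ∀ α β, toFun (α ++ β) ≤ toFun α + toFun β

/-- bounded complexity measure -/
structure BCM extends PBCM where
  bdd : ∀ α, α.length ≤ toFun α

/-- extension of ψ to words over pairs `(f_i, δ)` -/
def PBCM.onWord (ψ : PBCM) (α : List (ℕ × ℕ)) : ℕ := ψ.toFun (α.map Prod.fst)

/-- extension of ψ to finite sets of attributes -/
def PBCM.onSet (ψ : PBCM) (s : Finset ℕ) : ℕ := ψ.toFun (s.sort (· ≤ ·))

/-- the depth `h` -/
def depthCM : BCM where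
  toFun := List.length
  pos := fun α => List.length_eq_zero_iff
  perm := fun _ _ h => h.length_eq
  mono := fun α β => by simp
  subadd := fun α β => by simp
  bdd := fun _ => le_rfl

/-- `ψ(Γ)` : complexity of a decision tree -/
def treeComp {k : ℕ} (ψ : PBCM) (Γ : KTree k) : ℕ :=
  sSup {c | ∃ p ∈ Γ.paths, ψ.onWord p.1 = c}

/-- `Γ` is a nondeterministic decision tree for the (nonempty) table `T` -/
def isNDT {k : ℕ} (T : Table k) (Γ : KTree k) : Prop :=
  T.rows.Nonempty ∧ Γ.wf ∧ Γ.attrs ⊆ T.attrs ∧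
  (∀ r ∈ T.rows, ∃ p ∈ Γ.paths, Table.rowSat r p.1) ∧
  (∀ p ∈ Γ.paths, (T.applyWord p.1).rows = ∅ ∨ ∀ r ∈ (T.applyWord p.1).rows, p.2 ∈ T.dec r)

/-- `Γ` is a deterministic decision tree for `T` -/
def isDDT {k : ℕ} (T : Table k) (Γ : KTree k) : Prop :=
  isNDT T Γ ∧ Γ.n = 0 ∧ ∀ i, (Γ.sub i).det

/-- `ψ^a(T)` -/
def psiA {k : ℕ} (ψ : PBCM) (T : Table k) : ℕ :=
  sInf {c | ∃ Γ : KTree k, isNDT T Γ ∧ treeComp ψ Γ = c}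

/-- `ψ^d(T)` -/
def psiD {k : ℕ} (ψ : PBCM) (T : Table k) : ℕ :=
  sInf {c | ∃ Γ : KTree k, isDDT T Γ ∧ treeComp ψ Γ = c}

/-- `m_ψ(T)` -/
def mpsi {k : ℕ} (ψ : PBCM) (T : Table k) : ℕ :=
  if T.rows = ∅ then 0 else T.attrs.sup fun i => ψ.toFun [i]

/-- `W_ψ(T)` -/
def Wpsi {k : ℕ} (ψ : PBCM) (T : Table k) : ℕ :=
  if T.rows = ∅ then 0 else ψ.onSet T.attrs

/-- a tuple `δ̄ ∈ E_k^{|At(T)|}` -/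
def validTuple {k : ℕ} (T : Table k) (δ : ℕ → ℕ) : Prop :=
  (∀ i ∈ T.attrs, δ i < k) ∧ ∀ i ∉ T.attrs, δ i = 0

/-- `M_ψ(T, δ̄)` -/
def MpsiAt {k : ℕ} (ψ : PBCM) (T : Table k) (δ : ℕ → ℕ) : ℕ :=
  sInf {p | ∃ s : Finset ℕ, s ⊆ T.attrs ∧
    (T.applyWord ((s.sort (· ≤ ·)).map fun i => (i, δ i))).hasCommon ∧ ψ.onSet s = p}

/-- `M_ψ(T)` -/
def Mpsi {k : ℕ} (ψ : PBCM) (T : Table k) : ℕ :=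
  if T.hasCommon then 0 else sSup {p | ∃ δ, validTuple T δ ∧ MpsiAt ψ T δ = p}

/-- `U` is a `(ψ,n)`-cover of `T` -/
def isCover {k : ℕ} (ψ : PBCM) (n : ℕ) (T : Table k) (U : Finset (List (ℕ × ℕ))) : Prop :=
  (∀ α ∈ U, T.wordOk α ∧ ψ.onWord α ≤ n) ∧ ∀ r ∈ T.rows, ∃ α ∈ U, Table.rowSat r α

/-- `U` is an irreducible `(ψ,n)`-cover of `T` -/
def isIrredCover {k : ℕ} (ψ : PBCM) (n : ℕ) (T : Table k) (U : Finset (List (ℕ × ℕ))) : Prop :=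
  isCover ψ n T U ∧ ∀ V ⊂ U, ¬ isCover ψ n T V

/-- `l_ψ(T,n)` : maximum cardinality of an irreducible `(ψ,n)`-cover -/
def lpsi {k : ℕ} (ψ : PBCM) (T : Table k) (n : ℕ) : ℕ :=
  sSup {c | ∃ U, isIrredCover ψ n T U ∧ U.card = c}

/-- the set `{ψ^d(T) : T ∈ A, ψ^a(T) ≤ n}`; `H^∞_{ψ,A}(n)` is defined iff this set
is finite, and is then its maximum -/
def HSet {k : ℕ} (ψ : PBCM) (A : Set (Table k)) (n : ℕ) : Set ℕ :=
  {c | ∃ T ∈ A, psiA ψ T ≤ n ∧ psiD ψ T = c}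

/-- `H^∞_{ψ,A}(n)` (as the max = sSup of the finite set `HSet ψ A n`) -/
def Hfun {k : ℕ} (ψ : PBCM) (A : Set (Table k)) (n : ℕ) : ℕ := sSup (HSet ψ A n)

/-- the set `{l_ψ(T,n) : T ∈ A}` -/
def LSet {k : ℕ} (ψ : PBCM) (A : Set (Table k)) (n : ℕ) : Set ℕ :=
  {c | ∃ T ∈ A, lpsi ψ T n = c}

/-- `L_{ψ,A}(n)` -/
def Lfun {k : ℕ} (ψ : PBCM) (A : Set (Table k)) (n : ℕ) : ℕ := sSup (LSet ψ A n)

/-- `H_D` for an infinite `D ⊆ ℕ` : `H_D(n)` is the largest element of `D` that is `≤ n`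
(and `0` if there is none) -/
def HDfun (D : Set ℕ) (n : ℕ) : ℕ := sSup {d | d ∈ D ∧ d ≤ n}

/-- a complete table from `M_2^∞` -/
def isComplete (Q : Table 2) : Prop := Q.NT = 2 ^ Q.attrs.card

/-- `Z(T)` : maximum number of columns in a complete table from `[T]` (`0` if none) -/
def Zt (T : Table 2) : ℕ := sSup {c | ∃ Q ∈ Table.closureT T, isComplete Q ∧ Q.WT = c}

/-- the set `{Z(T) : T ∈ A_ψ(n)}` -/
def ZSet (ψ : PBCM) (A : Set (Table 2)) (n : ℕ) : Set ℕ :=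
  {c | ∃ T ∈ A, mpsi ψ T ≤ n ∧ Zt T = c}

/-- `Z_{ψ,A}(n)` -/
def Zfun (ψ : PBCM) (A : Set (Table 2)) (n : ℕ) : ℕ := sSup (ZSet ψ A n)

/-- annihilating word for `T` -/
def isAnnih (T : Table 2) (α : List (ℕ × ℕ)) : Prop :=
  T.wordOk α ∧ (∀ p ∈ α, ∀ q ∈ α, p.1 = q.1 → p.2 = q.2) ∧ (T.applyWord α).rows = ∅

/-- irreducible annihilating word for `T` -/
def isIrredAnnih (T : Table 2) (α : List (ℕ × ℕ)) : Prop :=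
  isAnnih T α ∧ ∀ β, β.Sublist α → β ≠ α → ¬ isAnnih T β

/-- `G(T)` : maximum length of an irreducible annihilating word (`0` if none) -/
def Gt (T : Table 2) : ℕ := sSup {c | ∃ α, isIrredAnnih T α ∧ α.length = c}

/-- the set `{G(T) : T ∈ A_ψ(n)}` -/
def GSet (ψ : PBCM) (A : Set (Table 2)) (n : ℕ) : Set ℕ :=
  {c | ∃ T ∈ A, mpsi ψ T ≤ n ∧ Gt T = c}

/-- `G_{ψ,A}(n)` -/
def Gfun (ψ : PBCM) (A : Set (Table 2)) (n : ℕ) : ℕ := sSup (GSet ψ A n)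

/-! ### The tables `T_k` and `T_k^*` built from the triangle-shaped graph `G_k` -/

/-- `m(k) = k(k+1)/2` : number of nodes of `G_k` -/
def mnum (k : ℕ) : ℕ := k * (k + 1) / 2

/-- the layer of node `i` of `G_k` : the unique `L` with `m(L-1) < i ≤ m(L)` -/
def layer (i : ℕ) : ℕ := sInf {L | i ≤ mnum L}

/-- left child `l(i) = i + layer i`; right child `p(i) = i + layer i + 1` -/
def lchild (i : ℕ) : ℕ := i + layer i

def rchild (i : ℕ) : ℕ := i + layer i + 1

/-- the map `ν_k : E_2^{m(k)} → P(ω)` -/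
def nuk (k : ℕ) (δ : ℕ → ℕ) : Finset ℕ :=
  (Finset.range (mnum k + 1)).filter fun i =>
    if i = 0 then δ 1 = 0
    else if layer i = k then δ i = 1
    else δ i = 1 ∧ δ (lchild i) = 0 ∧ δ (rchild i) = 0

/-- all tuples over `E_k` supported on the attribute set `s` -/
def allRows (k : ℕ) (s : Finset ℕ) : Finset (ℕ → ℕ) :=
  (s.pi fun _ => Finset.range k).image fun f i => if h : i ∈ s then f i h else 0

/-- the table with attribute set `s`, all possible rows, and decision labeling `d` -/
def fullTable (k : ℕ) (s : Finset ℕ) (d : (ℕ → ℕ) → Finset ℕ) : Table k where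
  attrs := s
  rows := allRows k s
  dec := fun r => if (d r).Nonempty then d r else {0}
  rows_mem := by
    intro r hr
    simp only [allRows, Finset.mem_image] at hr
    obtain ⟨f, hf, rfl⟩ := hr
    refine ⟨fun i hi => ?_, fun i hi => ?_⟩
    · have h := (Finset.mem_pi.mp hf) i hi
      simp only [Finset.mem_range] at h
      simpa [hi] using h
    · simp [hi]
  dec_nonempty := by
    intro r _
    by_cases h : (d r).Nonempty
    · simp [h]
    · simp [h]

/-- the complete table `T_k` with `m(k)` columns `f_1, …, f_{m(k)}` and `2^{m(k)}` rows,
each row `δ̄` labeled with `ν_k(δ̄)` (which is always nonempty) -/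
def Tk (k : ℕ) : Table 2 := fullTable 2 (Finset.Icc 1 (mnum k)) (nuk k)

/-- the `j`-th node of the complete path of `G_k` determined by the choices `c` -/
def pathNode (c : ℕ → Bool) : ℕ → ℕ
  | 0 => 1
  | j + 1 => if c j then lchild (pathNode c j) else rchild (pathNode c j)

/-- `T_k^*` : the subtable of `T_k` whose rows are exactly the characteristic tuples
of complete paths of `G_k` -/
def Tstar (k : ℕ) : Table 2 where
  attrs := (Tk k).attrs
  rows := (Tk k).rows.filter fun r =>
    ∃ c : ℕ → Bool, ∀ i ∈ Finset.Icc 1 (mnum k), (r i = 1 ↔ ∃ j < k, pathNode c j = i)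
  dec := (Tk k).dec
  rows_mem := fun r hr => (Tk k).rows_mem r (Finset.mem_filter.mp hr).1
  dec_nonempty := fun r hr => (Tk k).dec_nonempty r (Finset.mem_filter.mp hr).1

/-- `r(T)` for a subtable `T` of `T_k^*` : the number of distinct decision sets
`ν_k(δ̄)` among the rows `δ̄` of `T` -/
def rnum (k : ℕ) (T : Table 2) : ℕ := (T.rows.image (nuk k)).card

end

/-!
An irreducible annihilating word `α` of `T ∈ A_ψ(n)` yields the table `Q ∈ [T]` on the attributes
of `α` in which a row is labelled by the attributes where it contradicts `α`. A nondeterministic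
tree guessing one contradicted letter has complexity at most `m_ψ(T) ≤ n`. By irreducibility,
each letter of `α` is the only one contradicted by some row; these `|α|` rows have pairwise
different decisions and differ pairwise in two attributes only, so every deterministic tree for
`Q` has a path of length at least `|α| - 1`, and `ψ^d(Q) ≥ |α| - 1` because `ψ` is bounded.
Thus unbounded `G` on `A_ψ(n)` makes `ψ^d` unbounded on `{Q ∈ A : ψ^a(Q) ≤ n}`.
-/

namespace Table

variable {k : ℕ}

theorem rowSat_cons {r : ℕ → ℕ} {q : ℕ × ℕ} {w : List (ℕ × ℕ)} :
    rowSat r (q :: w) ↔ r q.1 = q.2 ∧ rowSat r w :=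
  List.forall_mem_cons

theorem eq_of_rowSat {T : Table k} {w : List (ℕ × ℕ)} (hw : T.attrs ⊆ (w.map Prod.fst).toFinset)
    {r r' : ℕ → ℕ} (hr : r ∈ T.rows) (hr' : r' ∈ T.rows) (hrw : rowSat r w)
    (hrw' : rowSat r' w) : r = r' := by
  funext i
  by_cases hi : i ∈ T.attrs
  · obtain ⟨q, hq, rfl⟩ := List.mem_map.1 (List.mem_toFinset.1 (hw hi))
    rw [hrw q hq, hrw' q hq]
  · rw [(T.rows_mem r hr).2 i hi, (T.rows_mem r' hr').2 i hi]

theorem hasCommon_applyWord {T : Table k} {w : List (ℕ × ℕ)}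
    (hw : T.attrs ⊆ (w.map Prod.fst).toFinset) : (T.applyWord w).hasCommon := by
  rcases (T.applyWord w).rows.eq_empty_or_nonempty with h | ⟨r₀, hr₀⟩
  · exact ⟨0, by simp [h]⟩
  obtain ⟨hr₀T, hr₀w⟩ := Finset.mem_filter.1 hr₀
  obtain ⟨d, hd⟩ := T.dec_nonempty r₀ hr₀T
  refine ⟨d, fun r hr => ?_⟩
  obtain ⟨hrT, hrw⟩ := Finset.mem_filter.1 hr
  rwa [eq_of_rowSat hw hrT hr₀T hrw hr₀w]

end Table

namespace DTree

variable {k : ℕ}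

theorem mem_paths_node {a n : ℕ} {lab : Fin (n + 1) → ℕ} {ch : Fin (n + 1) → DTree k}
    {p : List (ℕ × ℕ) × ℕ} :
    p ∈ (node a n lab ch).paths ↔ ∃ i, ∃ p' ∈ (ch i).paths, p = ((a, lab i) :: p'.1, p'.2) := by
  simp only [paths, Set.mem_iUnion, Set.mem_image]
  exact exists_congr fun i => exists_congr fun p' => and_congr_right fun _ => eq_comm

theorem paths_nonempty (t : DTree k) : t.paths.Nonempty := by
  induction t with
  | leaf d => exact ⟨([], d), rfl⟩
  | node a n lab ch ih =>
    obtain ⟨p, hp⟩ := ih 0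
    exact ⟨_, mem_paths_node.2 ⟨0, p, hp, rfl⟩⟩

theorem paths_finite (t : DTree k) : t.paths.Finite := by
  induction t with
  | leaf d => exact Set.finite_singleton _
  | node a n lab ch ih => exact Set.finite_iUnion fun i => (ih i).image _

theorem exists_child_of_rowSat {a n : ℕ} {lab : Fin (n + 1) → ℕ} {ch : Fin (n + 1) → DTree k}
    {w : List (ℕ × ℕ)} {d : ℕ} {r : ℕ → ℕ} (hw : (w, d) ∈ (node a n lab ch).paths)
    (hr : Table.rowSat r w) :
    ∃ i, r a = lab i ∧ ∃ w', (w', d) ∈ (ch i).paths ∧ Table.rowSat r w' := by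
  obtain ⟨i, p, hp, hwp⟩ := mem_paths_node.1 hw
  obtain ⟨rfl, rfl⟩ := Prod.ext_iff.1 hwp
  exact ⟨i, (Table.rowSat_cons.1 hr).1, p.1, hp, (Table.rowSat_cons.1 hr).2⟩

/-- In a deterministic tree, rows that pairwise differ only at their own attributes `a i` but
must reach pairwise different leaves stay on one path until their attributes are queried. -/
theorem exists_card_le_length_of_det {ι : Type*} {t : DTree k} (ht : t.det)
    (J : Finset ι) (a : ι → ℕ) (ha : Set.InjOn a J) (q : ι → ℕ → ℕ)
    (hq : ∀ i ∈ J, ∀ j ∈ J, ∀ x, x ≠ a i → x ≠ a j → q i x = q j x)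
    (hpath : ∀ i ∈ J, ∃ w, (w, a i) ∈ t.paths ∧ Table.rowSat (q i) w) :
    ∃ p ∈ t.paths, J.card ≤ p.1.length + 1 := by
  induction t generalizing J with
  | leaf d =>
    refine ⟨([], d), rfl, ?_⟩
    have hleaf : ∀ i ∈ J, a i = d := fun i hi => by
      obtain ⟨w, hw, -⟩ := hpath i hi
      exact (Prod.ext_iff.1 hw).2
    have : J.card ≤ 1 := Finset.card_le_one.2 fun i hi j hj =>
      ha hi hj ((hleaf i hi).trans (hleaf j hj).symm)
    simpa using this
  | node b n lab ch ih =>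
    obtain ⟨hlab, hch⟩ := ht
    set J' := J.filter (a · ≠ b)
    have hJ' : J' ⊆ J := Finset.filter_subset _ _
    have hcard : J.card ≤ J'.card + 1 := by
      have hb : (J.filter (¬ a · ≠ b)).card ≤ 1 := Finset.card_le_one.2 fun i hi j hj => by
        simp only [Finset.mem_filter, not_not] at hi hj
        exact ha hi.1 hj.1 (hi.2.trans hj.2.symm)
      have := Finset.card_filter_add_card_filter_not (s := J) (a · ≠ b)
      simp only [J'] at this ⊢
      omega
    rcases J'.eq_empty_or_nonempty with hJ'e | ⟨i₁, hi₁⟩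
    · obtain ⟨p, hp⟩ := paths_nonempty (node b n lab ch)
      exact ⟨p, hp, by rw [hJ'e, Finset.card_empty] at hcard; omega⟩
    obtain ⟨hi₁J, hi₁b⟩ := Finset.mem_filter.1 hi₁
    obtain ⟨w₁, hw₁, hs₁⟩ := hpath i₁ hi₁J
    obtain ⟨c, hc, -⟩ := exists_child_of_rowSat hw₁ hs₁
    have hpath' : ∀ i ∈ J', ∃ w, (w, a i) ∈ (ch c).paths ∧ Table.rowSat (q i) w := by
      intro i hi
      obtain ⟨hiJ, hib⟩ := Finset.mem_filter.1 hi
      obtain ⟨w, hw, hs⟩ := hpath i hiJ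
      obtain ⟨c', hc', hw'⟩ := exists_child_of_rowSat hw hs
      have hb : q i b = q i₁ b := hq i hiJ i₁ hi₁J b (Ne.symm hib) (Ne.symm hi₁b)
      obtain rfl : c' = c := hlab (by rw [← hc', ← hc, hb])
      exact hw'
    obtain ⟨p, hp, hlen⟩ :=
      ih c (hch c) J' (ha.mono hJ') (fun i hi j hj => hq i (hJ' hi) j (hJ' hj)) hpath'
    exact ⟨((b, lab c) :: p.1, p.2), mem_paths_node.2 ⟨c, p, hp, rfl⟩,
      by rw [List.length_cons]; omega⟩

/-- The complete binary tree querying the attributes of `L`; the leaf reached along the word `w`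
is labelled `d w`. -/
def full (d : List (ℕ × ℕ) → ℕ) : List ℕ → DTree 2
  | [] => leaf (d [])
  | b :: L => node b 1 (fun i => i) (fun i => full (fun w => d ((b, i) :: w)) L)

theorem full_wf (d : List (ℕ × ℕ) → ℕ) (L : List ℕ) : (full d L).wf := by
  induction L generalizing d with
  | nil => trivial
  | cons b L ih => exact ⟨fun i => i.2, fun _ => ih _⟩

theorem full_det (d : List (ℕ × ℕ) → ℕ) (L : List ℕ) : (full d L).det := by
  induction L generalizing d with
  | nil => trivial
  | cons b L ih => exact ⟨fun _ _ h => Fin.ext h, fun _ => ih _⟩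

theorem full_attrs (d : List (ℕ × ℕ) → ℕ) (L : List ℕ) : (full d L).attrs ⊆ L.toFinset := by
  induction L generalizing d with
  | nil => simp [full, attrs]
  | cons b L ih =>
    intro x hx
    simp only [full, attrs, Finset.mem_insert, Finset.mem_biUnion] at hx
    rcases hx with rfl | ⟨i, -, hx⟩
    · simp
    · simpa using Or.inr (ih _ hx)

theorem full_paths {d : List (ℕ × ℕ) → ℕ} {L : List ℕ} {p : List (ℕ × ℕ) × ℕ}
    (hp : p ∈ (full d L).paths) : p.1.map Prod.fst = L ∧ p.2 = d p.1 := by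
  induction L generalizing d p with
  | nil => obtain rfl : p = ([], d []) := hp; simp
  | cons b L ih =>
    obtain ⟨i, p', hp', rfl⟩ := mem_paths_node.1 hp
    obtain ⟨h1, h2⟩ := ih hp'
    exact ⟨by simp [h1], h2⟩

theorem mem_paths_full (d : List (ℕ × ℕ) → ℕ) (L : List ℕ) {r : ℕ → ℕ}
    (hr : ∀ b ∈ L, r b < 2) :
    (L.map fun b => (b, r b), d (L.map fun b => (b, r b))) ∈ (full d L).paths := by
  induction L generalizing d with
  | nil => rfl
  | cons b L ih =>
    refine mem_paths_node.2 ⟨⟨r b, hr b List.mem_cons_self⟩, _,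
      ih _ fun x hx => hr x (List.mem_cons_of_mem _ hx), rfl⟩

end DTree

namespace KTree

variable {k : ℕ}

theorem paths_finite (Γ : KTree k) : Γ.paths.Finite :=
  Set.finite_iUnion fun _ => DTree.paths_finite _

theorem paths_eq_sub_of_n_eq_zero (Γ : KTree k) (h : Γ.n = 0) (i : Fin (Γ.n + 1)) :
    Γ.paths = (Γ.sub i).paths := by
  ext p
  refine ⟨fun hp => ?_, fun hp => Set.mem_iUnion.2 ⟨i, hp⟩⟩
  obtain ⟨i', hi'⟩ := Set.mem_iUnion.1 hp
  obtain rfl : i' = i := Fin.ext (by have := i'.2; have := i.2; omega)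
  exact hi'

def ofList : (l : List (DTree k)) → l ≠ [] → KTree k
  | [], h => absurd rfl h
  | t :: ts, _ => ⟨ts.length, (t :: ts).get⟩

theorem mem_paths_ofList {l : List (DTree k)} (hl : l ≠ []) {p : List (ℕ × ℕ) × ℕ} :
    p ∈ (ofList l hl).paths ↔ ∃ t ∈ l, p ∈ t.paths := by
  cases l with
  | nil => exact absurd rfl hl
  | cons t ts =>
    simp only [ofList, paths, Set.mem_iUnion, List.mem_iff_get]
    exact ⟨fun ⟨i, hi⟩ => ⟨_, ⟨i, rfl⟩, hi⟩, fun ⟨_, ⟨i, hi⟩, hp⟩ => ⟨i, hi ▸ hp⟩⟩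

theorem sub_ofList_mem {l : List (DTree k)} (hl : l ≠ []) (i : Fin ((ofList l hl).n + 1)) :
    (ofList l hl).sub i ∈ l := by
  cases l with
  | nil => exact absurd rfl hl
  | cons t ts => exact List.get_mem (t :: ts) i

end KTree

theorem onWord_le_treeComp {k : ℕ} (ψ : PBCM) {Γ : KTree k} {p : List (ℕ × ℕ) × ℕ}
    (hp : p ∈ Γ.paths) : ψ.onWord p.1 ≤ treeComp ψ Γ := by
  refine le_csSup ?_ ⟨p, hp, rfl⟩
  simpa only [Set.image, eq_comm] using (Γ.paths_finite.image fun p => ψ.onWord p.1).bddAbove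

theorem treeComp_le {k : ℕ} (ψ : PBCM) {Γ : KTree k} {c : ℕ}
    (h : ∀ p ∈ Γ.paths, ψ.onWord p.1 ≤ c) : treeComp ψ Γ ≤ c :=
  csSup_le' <| by rintro _ ⟨p, hp, rfl⟩; exact h p hp

theorem psiA_le_treeComp {k : ℕ} (ψ : PBCM) {T : Table k} {Γ : KTree k} (hΓ : isNDT T Γ) :
    psiA ψ T ≤ treeComp ψ Γ :=
  Nat.sInf_le ⟨Γ, hΓ, rfl⟩

theorem toFun_singleton_le_mpsi {k : ℕ} (ψ : PBCM) {T : Table k} (hT : T.rows.Nonempty)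
    {i : ℕ} (hi : i ∈ T.attrs) : ψ.toFun [i] ≤ mpsi ψ T := by
  rw [mpsi, if_neg hT.ne_empty]
  exact Finset.le_sup (f := fun i => ψ.toFun [i]) hi

theorem length_le_onWord (ψ : BCM) (w : List (ℕ × ℕ)) : w.length ≤ ψ.onWord w := by
  simpa [PBCM.onWord] using ψ.bdd (w.map Prod.fst)

theorem exists_isDDT {T : Table 2} (hT : T.rows.Nonempty) : ∃ Γ : KTree 2, isDDT T Γ := by
  let d : List (ℕ × ℕ) → ℕ := fun w =>
    if h : (T.applyWord w).hasCommon then h.choose else 0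
  let t := DTree.full d T.attrs.toList
  refine ⟨⟨0, fun _ => t⟩, ⟨hT, fun _ => DTree.full_wf _ _, ?_, ?_, ?_⟩, rfl,
    fun _ => DTree.full_det _ _⟩
  · simpa [KTree.attrs] using DTree.full_attrs d T.attrs.toList
  · intro r hr
    exact ⟨_, Set.mem_iUnion.2 ⟨0, DTree.mem_paths_full d _ fun b hb =>
      (T.rows_mem r hr).1 b (Finset.mem_toList.1 hb)⟩, fun q hq => by
        obtain ⟨b, -, rfl⟩ := List.mem_map.1 hq
        rfl⟩
  · intro p hp
    obtain ⟨hmap, hdec⟩ := DTree.full_paths (Set.mem_iUnion.1 hp).choose_spec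
    have hc := Table.hasCommon_applyWord (T := T) (w := p.1) (by simp [hmap])
    refine Or.inr fun r hr => ?_
    rw [hdec, show d p.1 = hc.choose from dif_pos hc]
    exact hc.choose_spec r hr

theorem exists_treeComp_eq_psiD (ψ : PBCM) {T : Table 2} (hT : T.rows.Nonempty) :
    ∃ Γ, isDDT T Γ ∧ treeComp ψ Γ = psiD ψ T :=
  let ⟨Γ, hΓ⟩ := exists_isDDT hT
  Nat.sInf_mem (s := {c | ∃ Γ, isDDT T Γ ∧ treeComp ψ Γ = c}) ⟨_, Γ, hΓ, rfl⟩

section Annihilating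

variable {T : Table 2} {α β : List (ℕ × ℕ)}

theorem isAnnih.not_rowSat (h : isAnnih T α) {r : ℕ → ℕ} (hr : r ∈ T.rows) :
    ¬ Table.rowSat r α := fun hs => by
  have hmem : r ∈ (T.applyWord α).rows := Finset.mem_filter.2 ⟨hr, hs⟩
  simp [h.2.2] at hmem

theorem isAnnih.of_sublist (h : isAnnih T α) (hβ : β.Sublist α)
    (hrows : ∀ r ∈ T.rows, ¬ Table.rowSat r β) : isAnnih T β :=
  ⟨fun q hq => h.1 q (hβ.subset hq),
    fun p hp q hq => h.2.1 p (hβ.subset hp) q (hβ.subset hq),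
    Finset.filter_eq_empty_iff.2 hrows⟩

theorem isIrredAnnih.exists_rowSat_erase (h : isIrredAnnih T α) {q : ℕ × ℕ} (hq : q ∈ α) :
    ∃ r ∈ T.rows, Table.rowSat r (α.erase q) := by
  by_contra! hrows
  refine h.2 _ List.erase_sublist (fun he => ?_) (h.1.of_sublist List.erase_sublist hrows)
  have := congrArg List.length he
  rw [List.length_erase_of_mem hq] at this
  exact absurd this (by have := List.length_pos_of_mem hq; omega)

/-- Erasing a repeated letter keeps the set of letters, hence annihilation. -/
theorem isIrredAnnih.nodup (h : isIrredAnnih T α) : α.Nodup := by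
  by_contra hdup
  obtain ⟨q, hq⟩ : ∃ q, 1 < α.count q := by
    simpa [List.nodup_iff_count_le_one] using hdup
  have hqe : q ∈ α.erase q :=
    List.count_pos_iff.1 (by rw [List.count_erase_self]; exact Nat.zero_lt_sub_of_lt hq)
  obtain ⟨r, hr, hs⟩ := h.exists_rowSat_erase (List.mem_of_mem_erase hqe)
  refine h.1.not_rowSat hr fun p hp => ?_
  by_cases hpq : p = q
  · exact hpq ▸ hs q hqe
  · exact hs p ((List.mem_erase_of_ne hpq).2 hp)

theorem isIrredAnnih.rows_nonempty (h : isIrredAnnih T α) (hα : α ≠ []) : T.rows.Nonempty := by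
  obtain ⟨r, hr, -⟩ := h.exists_rowSat_erase (List.head_mem hα)
  exact ⟨r, hr⟩

theorem exists_isIrredAnnih_length_eq_Gt (h : 0 < Gt T) :
    ∃ α, isIrredAnnih T α ∧ α.length = Gt T := by
  have hne : {c | ∃ α, isIrredAnnih T α ∧ α.length = c}.Nonempty :=
    Set.nonempty_iff_ne_empty.2 fun he => by simp [Gt, he] at h
  have hbdd : BddAbove {c | ∃ α, isIrredAnnih T α ∧ α.length = c} := by
    by_contra hb
    simp [Gt, csSup_of_not_bddAbove hb] at h
  exact Nat.sSup_mem hne hbdd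

end Annihilating

noncomputable def mismatchTable (T : Table 2) (α : List (ℕ × ℕ)) (h : isAnnih T α) : Table 2 where
  attrs := (α.map Prod.fst).toFinset
  rows := T.rows.image fun r i => if i ∈ (α.map Prod.fst).toFinset then r i else 0
  dec r := ((α.filter fun q => r q.1 ≠ q.2).map Prod.fst).toFinset
  rows_mem := by
    intro r hr
    obtain ⟨r₀, hr₀, rfl⟩ := Finset.mem_image.1 hr
    refine ⟨fun i hi => ?_, fun i hi => if_neg hi⟩
    obtain ⟨q, hq, rfl⟩ := List.mem_map.1 (List.mem_toFinset.1 hi)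
    simpa [hi] using (T.rows_mem r₀ hr₀).1 _ (h.1 q hq).1
  dec_nonempty := by
    intro r hr
    obtain ⟨r₀, hr₀, rfl⟩ := Finset.mem_image.1 hr
    obtain ⟨q, hq, hne⟩ := not_forall₂.1 (h.not_rowSat hr₀)
    refine ⟨q.1, List.mem_toFinset.2 (List.mem_map.2 ⟨q, List.mem_filter.2 ⟨hq, ?_⟩, rfl⟩)⟩
    simpa [show ∃ x, (q.1, x) ∈ α from ⟨q.2, hq⟩] using hne

section MismatchTable

variable {T : Table 2} {α : List (ℕ × ℕ)}

theorem mismatchTable_mem_closureT (h : isAnnih T α) : mismatchTable T α h ∈ T.closureT := by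
  have hsub : (α.map Prod.fst).toFinset ⊆ T.attrs := fun i hi => by
    obtain ⟨q, hq, rfl⟩ := List.mem_map.1 (List.mem_toFinset.1 hi)
    exact (h.1 q hq).1
  refine ⟨T.attrs \ (α.map Prod.fst).toFinset, Finset.sdiff_subset, ?_, ?_⟩ <;>
    simp only [Finset.sdiff_sdiff_eq_self hsub] <;> rfl

theorem mem_mismatchTable_dec (h : isAnnih T α) {r : ℕ → ℕ} {x : ℕ} :
    x ∈ (mismatchTable T α h).dec r ↔ ∃ q ∈ α, r q.1 ≠ q.2 ∧ q.1 = x := by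
  simp [mismatchTable, and_assoc]

theorem mismatchTable_rows_nonempty (h : isAnnih T α) (hT : T.rows.Nonempty) :
    (mismatchTable T α h).rows.Nonempty :=
  hT.image _

/-- Guess a letter `(a, δ)` of `α` contradicted by the row and check `a = 1 - δ`. -/
theorem psiA_mismatchTable_le (ψ : PBCM) (h : isAnnih T α) (hT : T.rows.Nonempty)
    (hα : α ≠ []) : psiA ψ (mismatchTable T α h) ≤ mpsi ψ T := by
  let test (q : ℕ × ℕ) : DTree 2 := .node q.1 0 (fun _ => 1 - q.2) fun _ => .leaf q.1
  let Γ := KTree.ofList (α.map test) (by simpa using hα)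
  have hΓ : ∀ p, p ∈ Γ.paths ↔ ∃ q ∈ α, p = ([(q.1, 1 - q.2)], q.1) := by
    intro p
    simp [Γ, KTree.mem_paths_ofList, test, DTree.paths]
  have hval : ∀ r ∈ T.rows, ∀ q ∈ α, r q.1 ≠ q.2 → r q.1 = 1 - q.2 := fun r hr q hq hne => by
    have := (T.rows_mem r hr).1 _ (h.1 q hq).1
    have := (h.1 q hq).2
    omega
  have hNDT : isNDT (mismatchTable T α h) Γ := by
    refine ⟨mismatchTable_rows_nonempty h hT, fun i => ?_, fun x hx => ?_, fun r hr => ?_,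
      fun p hp => ?_⟩
    · obtain ⟨q, hq, he⟩ := List.mem_map.1 (KTree.sub_ofList_mem _ i)
      rw [← he]
      exact ⟨fun _ => show 1 - q.2 < 2 by omega, fun _ => trivial⟩
    · obtain ⟨i, -, hx⟩ := Finset.mem_biUnion.1 hx
      obtain ⟨q, hq, he⟩ := List.mem_map.1 (KTree.sub_ofList_mem _ i)
      rw [← he] at hx
      simp only [test, DTree.attrs, Finset.mem_insert, Finset.mem_biUnion] at hx
      rcases hx with rfl | ⟨-, -, hx⟩
      · exact List.mem_toFinset.2 (List.mem_map_of_mem hq)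
      · simp at hx
    · obtain ⟨r₀, hr₀, rfl⟩ := Finset.mem_image.1 hr
      obtain ⟨q, hq, hne⟩ := not_forall₂.1 (h.not_rowSat hr₀)
      refine ⟨_, (hΓ _).2 ⟨q, hq, rfl⟩, ?_⟩
      simpa [Table.rowSat, show ∃ x, (q.1, x) ∈ α from ⟨q.2, hq⟩] using hval r₀ hr₀ q hq hne
    · obtain ⟨q, hq, rfl⟩ := (hΓ p).1 hp
      refine Or.inr fun r hr => (mem_mismatchTable_dec h).2 ⟨q, hq, ?_, rfl⟩
      have hrq : r q.1 = 1 - q.2 := (Finset.mem_filter.1 hr).2 _ List.mem_cons_self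
      have := (h.1 q hq).2
      omega
  refine (psiA_le_treeComp ψ hNDT).trans (treeComp_le ψ fun p hp => ?_)
  obtain ⟨q, hq, rfl⟩ := (hΓ p).1 hp
  exact toFun_singleton_le_mpsi ψ hT (h.1 q hq).1

theorem exists_mem_mismatchTable_rowSat_erase (h : isIrredAnnih T α) {q : ℕ × ℕ}
    (hq : q ∈ α) : ∃ ρ ∈ (mismatchTable T α h.1).rows, Table.rowSat ρ (α.erase q) := by
  obtain ⟨r, hr, hs⟩ := h.exists_rowSat_erase hq
  refine ⟨_, Finset.mem_image_of_mem _ hr, fun q' hq' => ?_⟩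
  have hq'α := List.mem_of_mem_erase hq'
  rw [if_pos (List.mem_toFinset.2 (List.mem_map_of_mem hq'α))]
  exact hs q' hq'

/-- For each letter `q` of `α`, a row contradicting `α` only at `q` has the single decision
`q.1`; these rows differ pairwise in just two attributes. -/
theorem exists_length_le_of_isDDT_mismatchTable (h : isIrredAnnih T α) {Γ : KTree 2}
    (hΓ : isDDT (mismatchTable T α h.1) Γ) : ∃ p ∈ Γ.paths, α.length ≤ p.1.length + 1 := by
  obtain ⟨⟨-, -, -, hcov, hdec⟩, hn, hdet⟩ := hΓ
  choose! ρ hρQ hρs using fun q (hq : q ∈ α) => exists_mem_mismatchTable_rowSat_erase h hq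
  have hρ_eq : ∀ q ∈ α, ∀ q' ∈ α, q' ≠ q → ρ q q'.1 = q'.2 := fun q hq q' hq' hne =>
    hρs q hq q' ((List.mem_erase_of_ne hne).2 hq')
  have hinj : Set.InjOn Prod.fst (α.toFinset : Set (ℕ × ℕ)) := fun q hq q' hq' he =>
    Prod.ext he (h.1.2.1 q (List.mem_toFinset.1 hq) q' (List.mem_toFinset.1 hq') he)
  have hcoh : ∀ q ∈ α.toFinset, ∀ q' ∈ α.toFinset, ∀ x, x ≠ q.1 → x ≠ q'.1 →
      ρ q x = ρ q' x := by
    intro q hq q' hq' x hxq hxq'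
    rw [List.mem_toFinset] at hq hq'
    by_cases hx : x ∈ (α.map Prod.fst).toFinset
    · obtain ⟨q'', hq'', rfl⟩ := List.mem_map.1 (List.mem_toFinset.1 hx)
      rw [hρ_eq q hq q'' hq'' (by rintro rfl; exact hxq rfl),
        hρ_eq q' hq' q'' hq'' (by rintro rfl; exact hxq' rfl)]
    · rw [((mismatchTable T α h.1).rows_mem _ (hρQ q hq)).2 x hx,
        ((mismatchTable T α h.1).rows_mem _ (hρQ q' hq')).2 x hx]
  have hpath : ∀ q ∈ α.toFinset, ∃ w, (w, q.1) ∈ (Γ.sub 0).paths ∧ Table.rowSat (ρ q) w := by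
    intro q hq
    rw [List.mem_toFinset] at hq
    obtain ⟨p, hp, hs⟩ := hcov _ (hρQ q hq)
    have hρp : ρ q ∈ ((mismatchTable T α h.1).applyWord p.1).rows :=
      Finset.mem_filter.2 ⟨hρQ q hq, hs⟩
    have hp2 : p.2 = q.1 := by
      rcases hdec p hp with he | hc
      · simp [he] at hρp
      · obtain ⟨q', hq', hne, he⟩ := (mem_mismatchTable_dec h.1).1 (hc _ hρp)
        by_contra hpq
        exact hne (hρ_eq q hq q' hq' (by rintro rfl; exact hpq he.symm))
    rw [← Γ.paths_eq_sub_of_n_eq_zero hn, ← hp2]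
    exact ⟨p.1, hp, hs⟩
  obtain ⟨p, hp, hlen⟩ :=
    DTree.exists_card_le_length_of_det (hdet 0) α.toFinset Prod.fst hinj ρ hcoh hpath
  rw [List.toFinset_card_of_nodup h.nodup] at hlen
  exact ⟨p, by rwa [Γ.paths_eq_sub_of_n_eq_zero hn 0], hlen⟩

theorem length_le_psiD_mismatchTable_add_one (ψ : BCM) (h : isIrredAnnih T α) (hα : α ≠ []) :
    α.length ≤ psiD ψ.toPBCM (mismatchTable T α h.1) + 1 := by
  obtain ⟨Γ, hΓ, hval⟩ := exists_treeComp_eq_psiD ψ.toPBCM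
    (mismatchTable_rows_nonempty h.1 (h.rows_nonempty hα))
  obtain ⟨p, hp, hlen⟩ := exists_length_le_of_isDDT_mismatchTable h hΓ
  calc α.length ≤ p.1.length + 1 := hlen
    _ ≤ treeComp ψ.toPBCM Γ + 1 :=
      Nat.add_le_add_right ((length_le_onWord ψ _).trans (onWord_le_treeComp _ hp)) 1
    _ = psiD ψ.toPBCM (mismatchTable T α h.1) + 1 := by rw [hval]

end MismatchTable

theorem exists_mem_HSet_le_add_one {A : Set (Table 2)} (hA : IsClosedClass A) (ψ : BCM)
    {n c : ℕ} (hc : c ∈ GSet ψ.toPBCM A n) (hpos : 0 < c) :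
    ∃ d ∈ HSet ψ.toPBCM A n, c ≤ d + 1 := by
  obtain ⟨T, hTA, hmT, rfl⟩ := hc
  obtain ⟨α, hα, hlen⟩ := exists_isIrredAnnih_length_eq_Gt hpos
  have hne : α ≠ [] := List.ne_nil_of_length_pos (hlen ▸ hpos)
  refine ⟨_, ⟨mismatchTable T α hα.1, hA T hTA (mismatchTable_mem_closureT hα.1), ?_, rfl⟩,
    hlen ▸ length_le_psiD_mismatchTable_add_one ψ hα hne⟩
  exact (psiA_mismatchTable_le _ hα.1 (hα.rows_nonempty hne) hne).trans hmT

theorem stmt17_general (A : Set (Table 2)) (hclosed : IsClosedClass A)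
    (ψ : BCM)
    (hG : ¬ ∀ n, (GSet ψ.toPBCM A n).Finite) :
    ¬ ∀ n, (HSet ψ.toPBCM A n).Finite := by
  refine fun hH => hG fun n => ?_
  obtain ⟨B, hB⟩ := (hH n).bddAbove
  refine (Set.finite_le_nat (B + 1)).subset fun c hc => ?_
  rcases Nat.eq_zero_or_pos c with rfl | hpos
  · exact Nat.zero_le _
  obtain ⟨d, hd, hcd⟩ := exists_mem_HSet_le_add_one hclosed ψ hc hpos
  exact hcd.trans (Nat.add_le_add_right (hB hd) 1)

/-- **Lemma (7M11).** If `G_{ψ,A}` is not everywhere defined, then `H^∞_{ψ,A}` is not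
everywhere defined. -/
theorem stmt17 (A : Set (Table 2)) (hclosed : IsClosedClass A)
    (hnontriv : NontrivialClass A) (ψ : BCM)
    (hG : ¬ ∀ n, (GSet ψ.toPBCM A n).Finite) :
    ¬ ∀ n, (HSet ψ.toPBCM A n).Finite :=
  stmt17_general A hclosed ψ hG
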